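/- Let (A, τ) be a subdirectly irreducible SMV-algebra. Then the Wajsberg hoop F_τ(A) := {a ∈ A : τ(a) = 1} (with operations →, ⊙, 1) is either trivial or subdirectly irreducible. -/

import Mathlib

/-- An MV-algebra `(A, ⊕, ¬, 0)`. -/
class MV (A : Type*) extends Zero A where
  oplus : A → A → A
  mvneg : A → A
  oplus_assoc : ∀ x y z : A, oplus (oplus x y) z = oplus x (oplus y z)
  oplus_comm : ∀ x y : A, oplus x y = oplus y x
  oplus_zero : ∀ x : A, oplus x 0 = x
  mvneg_mvneg : ∀ x : A, mvneg (mvneg x) = x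
  oplus_top : ∀ x : A, oplus x (mvneg 0) = mvneg 0
  luk : ∀ x y : A, oplus (mvneg (oplus (mvneg x) y)) y = oplus (mvneg (oplus (mvneg y) x)) x

namespace MV

variable {A : Type*} [MV A]

/-- The top element `1 = ¬0`. -/
def top : A := mvneg 0
/-- `x → y := ¬x ⊕ y`. -/
def imp (x y : A) : A := oplus (mvneg x) y
/-- `x ⊙ y := ¬(¬x ⊕ ¬y)`. -/
def odot (x y : A) : A := mvneg (oplus (mvneg x) (mvneg y))
/-- `x ⊖ y := ¬(¬x ⊕ y)`. -/
def ominus (x y : A) : A := mvneg (oplus (mvneg x) y)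
/-- Lattice join `x ∨ y := (x → y) → y`. -/
def mvsup (x y : A) : A := imp (imp x y) y
/-- Lattice meet `x ∧ y := x ⊙ (x → y)`. -/
def mvinf (x y : A) : A := odot x (imp x y)
/-- The lattice order: `x ≤ y` iff `x → y = 1`. -/
def mvle (x y : A) : Prop := imp x y = top
/-- Strict order. -/
def mvlt (x y : A) : Prop := mvle x y ∧ x ≠ y

/-- `(A, τ)` is an SMV-algebra. -/
structure IsSMV (τ : A → A) : Prop where
  map_top : τ top = top
  tau_oplus : ∀ x y : A, τ (oplus x y) = oplus (τ x) (τ (ominus y (odot x y)))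
  map_neg : ∀ x : A, τ (mvneg x) = mvneg (τ x)
  tau_fix : ∀ x y : A, τ (oplus (τ x) (τ y)) = oplus (τ x) (τ y)

/-- `(A, τ)` is a state morphism MV-algebra. -/
def IsSMMV (τ : A → A) : Prop := IsSMV τ ∧ ∀ x y : A, τ (oplus x y) = oplus (τ x) (τ y)

/-- An MV-filter. -/
structure IsFilter (F : Set A) : Prop where
  top_mem : top ∈ F
  mp : ∀ a b : A, a ∈ F → imp a b ∈ F → b ∈ F

/-- A `τ`-filter: an MV-filter closed under `τ`. -/
def IsTauFilter (τ : A → A) (F : Set A) : Prop := IsFilter F ∧ ∀ a ∈ F, τ a ∈ F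

/-- Subdirect irreducibility of an SMV-algebra: there is a minimum nontrivial `τ`-filter. -/
def SubdirIrrSMV (τ : A → A) : Prop :=
  ∃ F : Set A, IsTauFilter τ F ∧ F ≠ {top} ∧
    ∀ G : Set A, IsTauFilter τ G → G ≠ {top} → F ⊆ G

/-- A filter of the subalgebra/subhoop with universe `S`. -/
def IsFilterOn (S F : Set A) : Prop :=
  F ⊆ S ∧ top ∈ F ∧ ∀ a b : A, a ∈ F → b ∈ S → imp a b ∈ F → b ∈ F

/-- Subdirect irreducibility of the subalgebra/subhoop with universe `S`:
there is a minimum nontrivial filter on `S`. -/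
def SubdirIrrOn (S : Set A) : Prop :=
  ∃ F : Set A, IsFilterOn S F ∧ F ≠ {top} ∧
    ∀ G : Set A, IsFilterOn S G → G ≠ {top} → F ⊆ G

/-- The set `F_τ(A) = {a : τ a = 1}`. -/
def tauKernel (τ : A → A) : Set A := {a : A | τ a = top}

/-- Homomorphisms of MV-algebras. -/
structure IsMVHom {A B : Type*} [MV A] [MV B] (f : A → B) : Prop where
  map_oplus : ∀ x y : A, f (oplus x y) = oplus (f x) (f y)
  map_neg : ∀ x : A, f (mvneg x) = mvneg (f x)
  map_zero : f 0 = 0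

end MV

open MV

instance MV.instProd {A B : Type*} [MV A] [MV B] : MV (A × B) where
  oplus x y := (oplus x.1 y.1, oplus x.2 y.2)
  mvneg x := (mvneg x.1, mvneg x.2)
  oplus_assoc x y z := by simp [oplus_assoc]
  oplus_comm x y := by simp [oplus_comm x.1 y.1, oplus_comm x.2 y.2]
  oplus_zero x := by simp [oplus_zero]
  mvneg_mvneg x := by simp [mvneg_mvneg]
  oplus_top x := by simp [oplus_top]
  luk x y := by simp [luk]

instance MV.instPi {I : Type*} {A : I → Type*} [∀ i, MV (A i)] : MV (∀ i, A i) where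
  oplus x y i := oplus (x i) (y i)
  mvneg x i := mvneg (x i)
  oplus_assoc x y z := by funext i; simp [oplus_assoc]
  oplus_comm x y := by funext i; exact oplus_comm _ _
  oplus_zero x := by funext i; exact oplus_zero _
  mvneg_mvneg x := by funext i; exact mvneg_mvneg _
  oplus_top x := by funext i; exact oplus_top _
  luk x y := by funext i; exact luk _ _

/-!
The kernel `K = F_τ(A)` is itself a `τ`-filter, and every filter of the hoop `K` is already a
`τ`-filter of `A`: modus ponens in `A` stays inside `K`, and `τ` sends `K` to `1`. So when `K` is
nontrivial, the minimum nontrivial `τ`-filter of `A` lies in `K` and is the minimum nontrivial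
filter of `K`.
-/

namespace MV

variable {A : Type*} [MV A]

theorem zero_oplus (x : A) : oplus 0 x = x := by rw [oplus_comm, oplus_zero]

theorem top_oplus (x : A) : oplus top x = top := by rw [oplus_comm]; exact oplus_top x

theorem mvneg_top : (mvneg top : A) = 0 := mvneg_mvneg 0

theorem mvneg_oplus_self (x : A) : oplus (mvneg x) x = top := by
  simpa only [mvneg_top, zero_oplus, oplus_comm _ top, top_oplus] using luk (top : A) x

theorem ominus_oplus_of_mvle {x y : A} (h : mvle x y) : oplus (ominus y x) x = y := by
  unfold mvle imp at h
  rw [ominus, luk, h, mvneg_top, zero_oplus]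

theorem ominus_mvle (x y : A) : mvle (ominus x y) x := by
  rw [mvle, imp, ominus, mvneg_mvneg, oplus_assoc, oplus_comm y, ← oplus_assoc,
    mvneg_oplus_self, top_oplus]

namespace IsSMV

variable {τ : A → A}

theorem map_eq_top_of_mvle (h : IsSMV τ) {x y : A} (hxy : mvle x y) (hx : τ x = top) :
    τ y = top := by
  rw [← ominus_oplus_of_mvle hxy, oplus_comm, h.tau_oplus, hx, top_oplus]

/-- The kernel is closed under modus ponens because `τ (a → b) = τ (b ⊖ (¬a ⊙ b))` once
`τ a = 1`, and `b ⊖ (¬a ⊙ b) ≤ b`. -/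
theorem isTauFilter_tauKernel (h : IsSMV τ) : IsTauFilter τ (tauKernel τ) := by
  refine ⟨⟨h.map_top, fun a b (ha : τ a = top) (hab : τ (imp a b) = top) => ?_⟩,
    fun a (ha : τ a = top) => show τ (τ a) = top by rw [ha, h.map_top]⟩
  rw [imp, h.tau_oplus, h.map_neg, ha, mvneg_top, zero_oplus] at hab
  exact h.map_eq_top_of_mvle (ominus_mvle _ _) hab

end IsSMV

theorem IsFilter.isFilterOn {S F : Set A} (hF : IsFilter F) (hFS : F ⊆ S) : IsFilterOn S F :=
  ⟨hFS, hF.top_mem, fun a b ha _ hab => hF.mp a b ha hab⟩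

theorem IsFilterOn.isFilter {S G : Set A} (hS : IsFilter S) (hG : IsFilterOn S G) :
    IsFilter G := by
  obtain ⟨hGS, hGtop, hGmp⟩ := hG
  exact ⟨hGtop, fun a b ha hab => hGmp a b ha (hS.mp a b (hGS ha) (hGS hab)) hab⟩

theorem IsSMV.isTauFilter_of_isFilterOn_tauKernel {τ : A → A} (h : IsSMV τ) {G : Set A}
    (hG : IsFilterOn (tauKernel τ) G) : IsTauFilter τ G :=
  ⟨hG.isFilter h.isTauFilter_tauKernel.1,
    fun a ha => show τ a ∈ G by rw [hG.1 ha]; exact hG.2.1⟩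

end MV

/-- If `(A, τ)` is a subdirectly irreducible SMV-algebra, then the
Wajsberg hoop `F_τ(A)` is either trivial or subdirectly irreducible. -/
theorem kernel_trivial_or_subdirectly_irreducible {A : Type*} [MV A] (τ : A → A)
    (h : IsSMV τ) (hsi : SubdirIrrSMV τ) :
    tauKernel τ = ({top} : Set A) ∨ SubdirIrrOn (tauKernel τ) := by
  refine or_iff_not_imp_left.2 fun hK => ?_
  obtain ⟨F, hF, hFne, hFmin⟩ := hsi
  have hFK : F ⊆ tauKernel τ := hFmin _ h.isTauFilter_tauKernel hK
  exact ⟨F, hF.1.isFilterOn hFK, hFne,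
    fun G hG hGne => hFmin G (h.isTauFilter_of_isFilterOn_tauKernel hG) hGne⟩
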